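/- arXiv:2310.12566 — 2 statements merged into one kernel-verified Lean document; each statement's English description precedes it below -/
import Mathlib

section
/- Let n ≥ 2, δ(x) = ∏_{1 ≤ i < j ≤ n} (x_i - x_j - 1) and θ(x) = ∏_{i ≠ j} (x_i - x_j - 1) in ℂ[x_1, ..., x_n]. If p is a symmetric polynomial divisible by δ, then p is divisible by θ. -/
open MvPolynomial

private lemma aux_prod_dvd {α ι : Type*} [CommMonoidWithZero α] (s : Finset ι) (f : ι → α)
    (hp : ∀ i ∈ s, Prime (f i)) (hnd : ∀ i ∈ s, ∀ j ∈ s, i ≠ j → ¬ f i ∣ f j) :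
    ∀ p : α, (∀ i ∈ s, f i ∣ p) → ∏ i ∈ s, f i ∣ p := by
  classical
  induction s using Finset.induction_on with
  | empty => intro p _; simp
  | @insert a t ha ih =>
    intro p hd
    obtain ⟨c, rfl⟩ := hd a (Finset.mem_insert_self a t)
    rw [Finset.prod_insert ha]
    refine mul_dvd_mul_left (f a) (ih (fun i hi => hp i (Finset.mem_insert_of_mem hi))
      (fun i hi j hj hij => hnd i (Finset.mem_insert_of_mem hi) j (Finset.mem_insert_of_mem hj) hij)
      c (fun i hi => ?_))
    have hia : i ≠ a := fun h => ha (h ▸ hi)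
    rcases (hp i (Finset.mem_insert_of_mem hi)).2.2 _ _ (hd i (Finset.mem_insert_of_mem hi)) with h | h
    · exact absurd h (hnd i (Finset.mem_insert_of_mem hi) a (Finset.mem_insert_self a t) hia)
    · exact h

private lemma aux_prime {n : ℕ} {i j : Fin n} (hij : i ≠ j) :
    Prime (X i - X j - 1 : MvPolynomial (Fin n) ℂ) := by
  let e : Option {b : Fin n // b ≠ i} ≃ Fin n := Equiv.optionSubtypeNe i
  let φ := (renameEquiv ℂ e.symm).trans (optionEquivLeft ℂ {b : Fin n // b ≠ i})
  have key : φ (X i - X j - 1 : MvPolynomial (Fin n) ℂ)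
      = Polynomial.X - Polynomial.C (X ⟨j, fun h => hij h.symm⟩ + 1) := by
    simp only [φ, AlgEquiv.trans_apply, map_sub, map_one, renameEquiv_apply, rename_X]
    have h1 : e.symm i = none := Equiv.optionSubtypeNe_symm_self i
    have h2 : e.symm j = some ⟨j, fun h => hij h.symm⟩ :=
      Equiv.optionSubtypeNe_symm_of_ne (fun h => hij h.symm)
    rw [h1, h2, optionEquivLeft_X_none, optionEquivLeft_X_some, map_add, map_one]
    ring
  have := (MulEquiv.prime_iff φ.toMulEquiv
    (p := (X i - X j - 1 : MvPolynomial (Fin n) ℂ))).mp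
  apply this
  have hcoe : φ.toMulEquiv (X i - X j - 1 : MvPolynomial (Fin n) ℂ)
      = φ (X i - X j - 1) := rfl
  rw [hcoe, key]
  exact Polynomial.prime_X_sub_C _

private lemma aux_not_dvd {n : ℕ} {i j k l : Fin n} (hij : i ≠ j) (hkl : k ≠ l)
    (hne : (i, j) ≠ (k, l)) :
    ¬ (X i - X j - 1 : MvPolynomial (Fin n) ℂ) ∣ (X k - X l - 1) := by
  intro ⟨c, hc⟩
  by_cases hk : k = i
  · subst hk
    have hlj : l ≠ j := fun h => hne (by rw [h])
    have hli : l ≠ k := fun h => hkl h.symm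
    set a : Fin n → ℂ := fun t => if t = k then 1 else if t = l then 5 else 0 with ha
    have hthis := congrArg (eval a) hc
    simp only [map_sub, map_one, map_mul, eval_X] at hthis
    have e1 : a k = 1 := by simp [ha]
    have e2 : a l = 5 := by simp [ha, hli]
    have e3 : a j = 0 := by simp [ha, Ne.symm hij, Ne.symm hlj]
    rw [e1, e2, e3] at hthis
    norm_num at hthis
  · set a : Fin n → ℂ := fun t => if t = i then 1 else 0 with ha
    have hthis := congrArg (eval a) hc
    simp only [map_sub, map_one, map_mul, eval_X] at hthis
    have e1 : a i = 1 := by simp [ha]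
    have e2 : a j = 0 := by simp [ha, Ne.symm hij]
    have e3 : a k = 0 := by simp [ha, hk]
    rw [e1, e2, e3] at hthis
    by_cases hl : l = i
    · have e4 : a l = 1 := by simp [ha, hl]
      rw [e4] at hthis; norm_num at hthis
    · have e4 : a l = 0 := by simp [ha, hl]
      rw [e4] at hthis; norm_num at hthis

/-- If a symmetric polynomial is divisible by `δ = ∏_{i<j} (x_i - x_j - 1)`,
then it is divisible by `θ = ∏_{i≠j} (x_i - x_j - 1)`. -/
theorem stmt_4 (n : ℕ) (hn : 2 ≤ n)
    (δ θ p : MvPolynomial (Fin n) ℂ)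
    (hδ : δ = ∏ q ∈ Finset.univ.filter (fun q : Fin n × Fin n => q.1 < q.2),
      (X q.1 - X q.2 - 1))
    (hθ : θ = ∏ q ∈ Finset.univ.filter (fun q : Fin n × Fin n => q.1 ≠ q.2),
      (X q.1 - X q.2 - 1))
    (hsym : ∀ σ : Equiv.Perm (Fin n), rename σ p = p)
    (hdvd : δ ∣ p) :
    θ ∣ p := by
  subst hδ hθ
  -- each factor for i < j divides p
  have hlt : ∀ i j : Fin n, i < j → (X i - X j - 1 : MvPolynomial (Fin n) ℂ) ∣ p := by
    intro i j hij
    have hmem : ((i, j) : Fin n × Fin n) ∈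
        Finset.univ.filter (fun q : Fin n × Fin n => q.1 < q.2) := by
      simp [hij]
    have hfac := Finset.dvd_prod_of_mem
      (fun q : Fin n × Fin n => (X q.1 - X q.2 - 1 : MvPolynomial (Fin n) ℂ)) hmem
    exact dvd_trans hfac hdvd
  have hall : ∀ q ∈ Finset.univ.filter (fun q : Fin n × Fin n => q.1 ≠ q.2),
      (X q.1 - X q.2 - 1 : MvPolynomial (Fin n) ℂ) ∣ p := by
    intro q hq
    rw [Finset.mem_filter] at hq
    rcases lt_or_gt_of_ne hq.2 with h | h
    · exact hlt _ _ h
    · have h1 := hlt q.2 q.1 h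
      have h2 := map_dvd (rename (Equiv.swap q.1 q.2)) h1
      rw [hsym] at h2
      simpa only [map_sub, map_one, rename_X, Equiv.swap_apply_left, Equiv.swap_apply_right]
        using h2
  refine aux_prod_dvd _ _ ?_ ?_ p hall
  · intro q hq
    rw [Finset.mem_filter] at hq
    exact aux_prime hq.2
  · intro q hq r hr hqr
    rw [Finset.mem_filter] at hq hr
    refine aux_not_dvd hq.2 hr.2 ?_
    simpa [Prod.ext_iff] using hqr
end

section
/- Let n ≥ 2 and θ(x) = ∏_{i ≠ j}(x_i - x_j - 1) ∈ ℂ[x_1,...,x_n]. For μ, ν ∈ ℂ^n, the following are equivalent: (1) p(μ) = p(ν) for every polynomial p of the form p = c + θ·q with c ∈ ℂ and q symmetric; (2) either θ(μ) = θ(ν) = 0, or there exists a permutation σ ∈ S_n with ν_i = μ_{σ(i)} for all i. -/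
open MvPolynomial

private lemma perm_of_multiset_map_eq {n : ℕ} (f g : Fin n → ℂ)
    (h : Multiset.map f Finset.univ.val = Multiset.map g Finset.univ.val) :
    ∃ σ : Equiv.Perm (Fin n), ∀ i, g i = f (σ i) := by
  letI : LinearOrder ℂ :=
    LinearOrder.lift' (fun z => toLex (z.re, z.im))
      (fun a b hab => Complex.ext (congrArg (fun p => (ofLex p).1) hab)
        (congrArg (fun p => (ofLex p).2) hab))
  have hco : ∀ u : Fin n → ℂ, (↑(List.ofFn u) : Multiset ℂ) = Multiset.map u Finset.univ.val := by
    intro u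
    simp [List.ofFn_eq_map, Fin.univ_def, ← Multiset.map_coe]
  have hperm : (List.ofFn f).Perm (List.ofFn g) := by
    rw [← Multiset.coe_eq_coe, hco, hco, h]
  have h1 : Monotone (f ∘ Tuple.sort f) := Tuple.monotone_sort f
  have h2 : Monotone (g ∘ Tuple.sort g) := Tuple.monotone_sort g
  have heq : List.ofFn (f ∘ Tuple.sort f) = List.ofFn (g ∘ Tuple.sort g) :=
    List.Perm.eq_of_sortedLE h1.sortedLE_ofFn h2.sortedLE_ofFn
      ((((Tuple.sort f).ofFn_comp_perm f).trans hperm).trans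
        ((Tuple.sort g).ofFn_comp_perm g).symm)
  have hfun : f ∘ Tuple.sort f = g ∘ Tuple.sort g := List.ofFn_inj.mp heq
  refine ⟨(Tuple.sort g)⁻¹.trans (Tuple.sort f), fun i => ?_⟩
  have := congrFun hfun ((Tuple.sort g)⁻¹ i)
  simpa using this.symm

/-- `μ` and `ν` agree on all polynomials of the form `c + θ·q` (with `q` symmetric)
iff either `θ` vanishes at both, or they are permutations of each other. -/
theorem stmt_6 (n : ℕ) (hn : 2 ≤ n)
    (θ : MvPolynomial (Fin n) ℂ)
    (hθ : θ = ∏ r ∈ Finset.univ.filter (fun r : Fin n × Fin n => r.1 ≠ r.2),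
      (X r.1 - X r.2 - 1))
    (μ ν : Fin n → ℂ) :
    (∀ (c : ℂ) (q : MvPolynomial (Fin n) ℂ),
        (∀ σ : Equiv.Perm (Fin n), rename σ q = q) →
        eval μ (C c + θ * q) = eval ν (C c + θ * q)) ↔
      ((eval μ θ = 0 ∧ eval ν θ = 0) ∨
        ∃ σ : Equiv.Perm (Fin n), ∀ i, ν i = μ (σ i)) := by
  have hθsym : ∀ τ : Equiv.Perm (Fin n), rename τ θ = θ := by
    intro τ
    rw [hθ, map_prod]
    refine Finset.prod_nbij' (fun r => (τ r.1, τ r.2)) (fun r => (τ.symm r.1, τ.symm r.2))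
      ?_ ?_ ?_ ?_ ?_
    · intro r hr
      simp only [Finset.mem_filter, Finset.mem_univ, true_and] at hr ⊢
      exact fun hc => hr (τ.injective hc)
    · intro r hr
      simp only [Finset.mem_filter, Finset.mem_univ, true_and] at hr ⊢
      exact fun hc => hr (τ.symm.injective hc)
    · intro r _; simp
    · intro r _; simp
    · intro r _
      simp [map_sub, rename_X]
  constructor
  · intro h
    have hθμν : eval μ θ = eval ν θ := by
      have := h 0 1 (fun σ => map_one _)
      simpa using this
    by_cases h0 : eval μ θ = 0
    · exact Or.inl ⟨h0, hθμν ▸ h0⟩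
    · right
      have hq : ∀ q : MvPolynomial (Fin n) ℂ, (∀ σ : Equiv.Perm (Fin n), rename σ q = q) →
          eval μ q = eval ν q := by
        intro q hsym
        have := h 0 q hsym
        simp only [map_zero, zero_add, eval_mul] at this
        rw [hθμν] at this
        exact mul_left_cancel₀ (hθμν ▸ h0) this
      have hes : ∀ k, (Finset.univ.val.map μ).esymm k = (Finset.univ.val.map ν).esymm k := by
        intro k
        have h1 := hq (esymm (Fin n) ℂ k) (esymm_isSymmetric (Fin n) ℂ k)
        have e1 : ∀ u : Fin n → ℂ, eval u (esymm (Fin n) ℂ k)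
            = (Finset.univ.val.map u).esymm k := by
          intro u
          rw [← aeval_esymm_eq_multiset_esymm (Fin n) ℂ k u]
          rfl
        rw [e1 μ, e1 ν] at h1
        exact h1
      have hms : Multiset.map μ Finset.univ.val = Multiset.map ν Finset.univ.val := by
        set s := Multiset.map μ Finset.univ.val
        set t := Multiset.map ν Finset.univ.val
        have hcard : Multiset.card s = Multiset.card t := by simp [s, t]
        have hprod : (s.map fun a => Polynomial.X - Polynomial.C a).prod
            = (t.map fun a => Polynomial.X - Polynomial.C a).prod := by
          rw [Multiset.prod_X_sub_X_eq_sum_esymm, Multiset.prod_X_sub_X_eq_sum_esymm, hcard]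
          exact Finset.sum_congr rfl fun j _ => by rw [hes j]
        have := Polynomial.roots_multiset_prod_X_sub_C s
        rw [hprod, Polynomial.roots_multiset_prod_X_sub_C t] at this
        exact this.symm
      exact perm_of_multiset_map_eq μ ν hms
  · rintro (⟨h1, h2⟩ | ⟨σ, hσ⟩) c q hsym
    · simp [h1, h2]
    · have hν : ν = μ ∘ σ := funext hσ
      rw [hν, ← eval_rename]
      conv_rhs => rw [map_add, map_mul, hθsym σ, hsym σ, rename_C]
end
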